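/- For every μ_c ∈ 𝔨, setting f_c := ‖μ_c‖², there exist constants c > 0 and ε > 0 (depending on μ_c) such that ‖x‖²·f(x) ≥ c·|f(x) − f_c|^{3/2} for all x ∈ ℂⁿ with ‖μ(x) − μ_c‖ < ε. -/

import Mathlib

open scoped Matrix

noncomputable section

/-- Matrix-vector multiplication, viewed as a map on Euclidean space
(the fundamental vector field of a linear action). -/
def mulVecE {n : ℕ} (ξ : Matrix (Fin n) (Fin n) ℂ) (x : EuclideanSpace ℂ (Fin n)) :
    EuclideanSpace ℂ (Fin n) :=
  (WithLp.equiv 2 (Fin n → ℂ)).symm (ξ.mulVec (WithLp.equiv 2 (Fin n → ℂ) x))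

/-- The real Frobenius inner product `⟪ξ,η⟫ = Re (tr (ξᴴ η))` on complex matrices. -/
def innK {n : ℕ} (ξ η : Matrix (Fin n) (Fin n) ℂ) : ℝ :=
  (Matrix.trace (ξᴴ * η)).re

/-- The Frobenius norm induced by `innK`. -/
def normK {n : ℕ} (ξ : Matrix (Fin n) (Fin n) ℂ) : ℝ :=
  Real.sqrt (innK ξ ξ)

/-!
Pairing the moment map equation with `ξ = μ x + α` gives
`‖μ x + α‖² = ½ Re ⟪i ξ x, x⟫ ≤ ½ ‖μ x + α‖ ‖x‖²`, so `‖μ x + α‖ ≤ ‖x‖² / 2`.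
For `μ x` close enough to `μ_c`, the distance `d = ‖μ x - μ_c‖` is at most `‖μ x‖` and at most
`‖μ x + α‖`; hence `2 d ≤ ‖x‖²` and `‖μ_c‖ ≤ 2 ‖μ x‖`. With `t = ‖μ x‖`, `m = ‖μ_c‖` this gives
`|t² - m²| = (t + m) |t - m| ≤ 3 t d` and `|t² - m²| ≤ 3 t²`, so
`|f x - f_c|^{3/2} ≤ 3 t d · 2 t ≤ 3 ‖x‖² f x`.
-/

open scoped Matrix.Norms.Frobenius
open Filter Topology

lemma innK_add_left {n : ℕ} (a b c : Matrix (Fin n) (Fin n) ℂ) :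
    innK (a + b) c = innK a c + innK b c := by
  simp [innK, Matrix.conjTranspose_add, add_mul, Matrix.trace_add]

lemma innK_self_eq_norm_sq {n : ℕ} (ξ : Matrix (Fin n) (Fin n) ℂ) : innK ξ ξ = ‖ξ‖ ^ 2 := by
  rw [Matrix.frobenius_norm_def, ← Real.sqrt_eq_rpow, Real.sq_sqrt (by positivity),
    Finset.sum_comm]
  simp [innK, Matrix.trace, Matrix.mul_apply, Complex.re_sum, ← Complex.normSq_eq_norm_sq,
    Complex.normSq_apply]

lemma normK_eq_norm {n : ℕ} (ξ : Matrix (Fin n) (Fin n) ℂ) : normK ξ = ‖ξ‖ := by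
  rw [normK, innK_self_eq_norm_sq, Real.sqrt_sq (norm_nonneg ξ)]

lemma norm_mulVecE_le {n : ℕ} (ξ : Matrix (Fin n) (Fin n) ℂ) (x : EuclideanSpace ℂ (Fin n)) :
    ‖mulVecE ξ x‖ ≤ ‖ξ‖ * ‖x‖ := by
  have h := Matrix.frobenius_norm_mul ξ (Matrix.replicateCol Unit x.ofLp)
  rwa [← Matrix.replicateCol_mulVec, Matrix.frobenius_norm_replicateCol,
    Matrix.frobenius_norm_replicateCol] at h

lemma norm_le_half_sq_of_innK_self_eq {n : ℕ} {ξ : Matrix (Fin n) (Fin n) ℂ}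
    (x : EuclideanSpace ℂ (Fin n))
    (h : innK ξ ξ = 1 / 2 * (inner ℂ (Complex.I • mulVecE ξ x) x : ℂ).re) :
    ‖ξ‖ ≤ ‖x‖ ^ 2 / 2 := by
  have hinner : (inner ℂ (Complex.I • mulVecE ξ x) x : ℂ).re ≤ ‖ξ‖ * ‖x‖ ^ 2 :=
    calc (inner ℂ (Complex.I • mulVecE ξ x) x : ℂ).re
        ≤ ‖Complex.I • mulVecE ξ x‖ * ‖x‖ := (Complex.re_le_norm _).trans (norm_inner_le_norm _ _)
      _ ≤ ‖ξ‖ * ‖x‖ * ‖x‖ := by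
          rw [norm_smul, Complex.norm_I, one_mul]
          exact mul_le_mul_of_nonneg_right (norm_mulVecE_le ξ x) (norm_nonneg x)
      _ = ‖ξ‖ * ‖x‖ ^ 2 := by ring
  rw [innK_self_eq_norm_sq] at h
  nlinarith [norm_nonneg ξ, sq_nonneg ‖x‖]

lemma eventually_norm_sub_le_norm {E : Type*} [SeminormedAddCommGroup E] (u : E) :
    ∀ᶠ w in 𝓝 u, ‖w - u‖ ≤ ‖w‖ := by
  rcases (norm_nonneg u).eq_or_lt with hu | hu
  · exact Eventually.of_forall fun w => by linarith [norm_sub_le w u]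
  · filter_upwards [Metric.ball_mem_nhds u (half_pos hu)] with w hw
    rw [mem_ball_iff_norm] at hw
    linarith [norm_sub_norm_le u w, norm_sub_rev w u]

lemma abs_sq_sub_sq_rpow_le {s t m : ℝ} (hm : 0 ≤ m) (htm : |t - m| ≤ t)
    (hs : 2 * |t - m| ≤ s) : |t ^ 2 - m ^ 2| ^ ((3 : ℝ) / 2) ≤ 3 * (s * t ^ 2) := by
  have ht : 0 ≤ t := (abs_nonneg _).trans htm
  have hm2 : m ≤ 2 * t := by linarith [(abs_le.mp htm).1]
  have hfactor : |t ^ 2 - m ^ 2| = (t + m) * |t - m| := by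
    rw [sq_sub_sq, abs_mul, abs_of_nonneg (by linarith)]
  have hlin : |t ^ 2 - m ^ 2| ≤ 3 * t * |t - m| := by
    rw [hfactor]; exact mul_le_mul_of_nonneg_right (by linarith) (abs_nonneg _)
  have hsqrt : √|t ^ 2 - m ^ 2| ≤ 2 * t := by
    rw [Real.sqrt_le_iff]
    refine ⟨by linarith, hlin.trans ?_⟩
    nlinarith
  calc |t ^ 2 - m ^ 2| ^ ((3 : ℝ) / 2) = |t ^ 2 - m ^ 2| * √|t ^ 2 - m ^ 2| := by
        rw [show (3 : ℝ) / 2 = 1 + 1 / 2 by norm_num, Real.rpow_add' (abs_nonneg _) (by norm_num),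
          Real.rpow_one, Real.sqrt_eq_rpow]
    _ ≤ 3 * t * |t - m| * (2 * t) :=
        mul_le_mul hlin hsqrt (Real.sqrt_nonneg _) (by positivity)
    _ = 3 * (t ^ 2 * (2 * |t - m|)) := by ring
    _ ≤ 3 * (s * t ^ 2) := by nlinarith [mul_le_mul_of_nonneg_left hs (sq_nonneg t)]

theorem stmt9_general (n : ℕ) (𝔨 : Submodule ℝ (Matrix (Fin n) (Fin n) ℂ))
    (α : Matrix (Fin n) (Fin n) ℂ) (hα : α ∈ 𝔨)
    (μ : EuclideanSpace ℂ (Fin n) → Matrix (Fin n) (Fin n) ℂ)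
    (hμmem : ∀ x, μ x ∈ 𝔨)
    (hμ : ∀ x, ∀ ξ ∈ 𝔨,
      innK (μ x) ξ
        = (1/2) * (inner ℂ (Complex.I • mulVecE ξ x) x : ℂ).re - innK α ξ)
    (f : EuclideanSpace ℂ (Fin n) → ℝ)
    (hf : ∀ x, f x = innK (μ x) (μ x))
    (μc : Matrix (Fin n) (Fin n) ℂ)
    (fc : ℝ) (hfc : fc = innK μc μc) :
    ∃ c > (0:ℝ), ∃ ε > (0:ℝ), ∀ x : EuclideanSpace ℂ (Fin n),
      normK (μ x - μc) < ε →
        ‖x‖ ^ 2 * f x ≥ c * |f x - fc| ^ ((3:ℝ)/2) := by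
  have hshift := ((continuous_add_const α).tendsto μc).eventually
    (eventually_norm_sub_le_norm (μc + α))
  obtain ⟨ε, hε, hnear⟩ :=
    Metric.eventually_nhds_iff.mp ((eventually_norm_sub_le_norm μc).and hshift)
  refine ⟨1 / 3, by norm_num, ε, hε, fun x hx => ?_⟩
  rw [normK_eq_norm, ← dist_eq_norm] at hx
  obtain ⟨hclose, hclose_shift⟩ := hnear hx
  rw [add_sub_add_right_eq_sub] at hclose_shift
  have hmoment : ‖μ x + α‖ ≤ ‖x‖ ^ 2 / 2 := by
    refine norm_le_half_sq_of_innK_self_eq x ?_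
    rw [innK_add_left, hμ x _ (add_mem (hμmem x) hα)]
    ring
  have hdist := abs_norm_sub_norm_le (μ x) μc
  have key := abs_sq_sub_sq_rpow_le (norm_nonneg μc) (hdist.trans hclose)
    (by linarith : 2 * |‖μ x‖ - ‖μc‖| ≤ ‖x‖ ^ 2)
  rw [hf, hfc, innK_self_eq_norm_sq, innK_self_eq_norm_sq]
  linarith

/-- The key estimate `‖x‖²·f(x) ≥ c·|f(x) − f_c|^{3/2}` near any level
`μ_c` of the moment map of a linear action of an abelian group. -/
theorem stmt9 (n : ℕ) (𝔨 : Submodule ℝ (Matrix (Fin n) (Fin n) ℂ))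
    (hskew : ∀ ξ ∈ 𝔨, ξᴴ = -ξ)
    (habelian : ∀ ξ ∈ 𝔨, ∀ η ∈ 𝔨, ξ * η = η * ξ)
    (α : Matrix (Fin n) (Fin n) ℂ) (hα : α ∈ 𝔨)
    (μ : EuclideanSpace ℂ (Fin n) → Matrix (Fin n) (Fin n) ℂ)
    (hμmem : ∀ x, μ x ∈ 𝔨)
    (hμ : ∀ x, ∀ ξ ∈ 𝔨,
      innK (μ x) ξ
        = (1/2) * (inner ℂ (Complex.I • mulVecE ξ x) x : ℂ).re - innK α ξ)
    (f : EuclideanSpace ℂ (Fin n) → ℝ)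
    (hf : ∀ x, f x = innK (μ x) (μ x))
    (μc : Matrix (Fin n) (Fin n) ℂ) (hμc : μc ∈ 𝔨)
    (fc : ℝ) (hfc : fc = innK μc μc) :
    ∃ c > (0:ℝ), ∃ ε > (0:ℝ), ∀ x : EuclideanSpace ℂ (Fin n),
      normK (μ x - μc) < ε →
        ‖x‖ ^ 2 * f x ≥ c * |f x - fc| ^ ((3:ℝ)/2) :=
  stmt9_general n 𝔨 α hα μ hμmem hμ f hf μc fc hfc
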